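/- Let 𝔩 be a finite-dimensional real Lie algebra admitting an inner product with respect to which ad(X) is skew-adjoint for every X ∈ 𝔩 (i.e., 𝔩 is a compact Lie algebra). Suppose 𝔩 = 𝔰 + 𝔧, where 𝔰 is a semisimple Lie subalgebra of 𝔩 and 𝔧 is a solvable ideal of 𝔩. Then 𝔧 equals the center of 𝔩 and [𝔩,𝔩] = 𝔰. -/

import Mathlib

/-!
By invariance, `B ⁅v, x⁆ ⁅v, x⁆ = -B x ⁅v, ⁅v, x⁆⁆`, so for an anisotropic invariant form
`⁅v, ⁅v, x⁆⁆ = 0` forces `⁅v, x⁆ = 0`. Hence an ideal whose derived ideal is central is itself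
central, and walking up the derived series shows that every solvable ideal, in particular `𝔧`, is
central. The same identity shows that the orthogonal complement of `⁅𝔩, 𝔩⁆` is central, so
`dim 𝔩 ≤ dim 𝔷(𝔩) + dim ⁅𝔩, 𝔩⁆`. Since `𝔰` has trivial center, `𝔰 ∩ 𝔷(𝔩) = 0`; with
`𝔧 ≤ 𝔷(𝔩)` and `𝔰 + 𝔧 = 𝔩` the modular law gives `𝔧 = 𝔷(𝔩)`. Then `⁅𝔩, 𝔩⁆ = ⁅𝔰, 𝔰⁆ ≤ 𝔰`, and
the dimension bound turns this inclusion into an equality.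
-/

open Module

namespace LieAlgebra

variable {R L : Type*} [CommRing R] [LieRing L] [LieAlgebra R L]

lemma disjoint_center_of_hasTrivialRadical (S : LieSubalgebra R L) [HasTrivialRadical R S] :
    Disjoint S.toSubmodule (center R L).toSubmodule := by
  rw [Submodule.disjoint_def]
  intro x hxS hxc
  have hx : (⟨x, hxS⟩ : S) ∈ center R S := fun y ↦ Subtype.ext (hxc y)
  rw [center_eq_bot, LieSubmodule.mem_bot] at hx
  exact congrArg Subtype.val hx

lemma lie_top_top_le_of_sup_center_eq_top (S : LieSubalgebra R L)
    (h : S.toSubmodule ⊔ (center R L).toSubmodule = ⊤) :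
    (⁅(⊤ : LieIdeal R L), ⊤⁆ : LieIdeal R L).toSubmodule ≤ S.toSubmodule := by
  have hdecomp (x : L) : ∃ s ∈ S, ∃ z ∈ center R L, s + z = x :=
    Submodule.mem_sup.mp (h ▸ Submodule.mem_top)
  rw [LieSubmodule.lieIdeal_oper_eq_linear_span', Submodule.span_le]
  rintro _ ⟨x, -, y, -, rfl⟩
  obtain ⟨s, hs, z, hz, rfl⟩ := hdecomp x
  obtain ⟨s', hs', z', hz', rfl⟩ := hdecomp y
  have hz_lie : ⁅z, s' + z'⁆ = 0 := by rw [← lie_skew, hz, neg_zero]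
  rw [add_lie, lie_add, hz_lie, hz' s, add_zero, add_zero]
  exact S.lie_mem hs hs'

section AnisotropicInvariantForm

variable {B : LinearMap.BilinForm R L} (hB : ∀ v, B v v = 0 → v = 0) (hinv : B.lieInvariant L)
include hB hinv

lemma lie_eq_zero_of_lie_lie_eq_zero {v x : L} (h : ⁅v, ⁅v, x⁆⁆ = 0) : ⁅v, x⁆ = 0 :=
  hB _ (by rw [hinv, h, map_zero, neg_zero])

lemma le_center_of_lie_le_center {I : LieIdeal R L} (h : ⁅I, I⁆ ≤ center R L) :
    I ≤ center R L := by
  intro v hv x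
  have hvvx : ⁅v, ⁅v, x⁆⁆ = 0 :=
    lie_eq_zero_of_lie_lie_eq_zero hB hinv <|
      h (LieSubmodule.lie_mem_lie hv (lie_mem_left R L I v x hv)) v
  rw [← lie_skew, lie_eq_zero_of_lie_lie_eq_zero hB hinv hvvx, neg_zero]

lemma le_center_of_derivedSeriesOfIdeal_le_center {I : LieIdeal R L} (k : ℕ)
    (h : derivedSeriesOfIdeal R L k I ≤ center R L) : I ≤ center R L := by
  induction k generalizing I with
  | zero => exact h
  | succ k ih =>
    refine le_center_of_lie_le_center hB hinv (ih ?_)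
    rwa [derivedSeriesOfIdeal_add, derivedSeriesOfIdeal_succ, derivedSeriesOfIdeal_zero] at h

lemma le_center_of_isSolvable (I : LieIdeal R L) [IsSolvable I] : I ≤ center R L := by
  obtain ⟨k, hk⟩ := IsSolvable.solvable R I
  rw [LieIdeal.derivedSeries_eq_bot_iff] at hk
  exact le_center_of_derivedSeriesOfIdeal_le_center hB hinv k (hk ▸ bot_le)

lemma orthogonal_lie_top_top_le_center :
    B.orthogonal (⁅(⊤ : LieIdeal R L), ⊤⁆ : LieIdeal R L).toSubmodule ≤
      (center R L).toSubmodule := by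
  intro z hz x
  refine hB _ ?_
  rw [← neg_eq_zero, ← hinv]
  exact hz _ (LieSubmodule.lie_mem_lie (LieSubmodule.mem_top x) (LieSubmodule.mem_top _))

end AnisotropicInvariantForm

lemma finrank_le_finrank_center_add_finrank_lie_top_top {K : Type*} [Field K] [LieAlgebra K L]
    [FiniteDimensional K L] {B : LinearMap.BilinForm K L} (hB : ∀ v, B v v = 0 → v = 0)
    (hinv : B.lieInvariant L) :
    finrank K L ≤ finrank K (center K L).toSubmodule +
      finrank K (⁅(⊤ : LieIdeal K L), ⊤⁆ : LieIdeal K L).toSubmodule := by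
  have hdim := LinearMap.BilinForm.finrank_add_finrank_orthogonal' (B := B)
    (⁅(⊤ : LieIdeal K L), ⊤⁆ : LieIdeal K L).toSubmodule
  have hperp := Submodule.finrank_mono (orthogonal_lie_top_top_le_center hB hinv)
  omega

end LieAlgebra

open Module LieAlgebra in
theorem solvable_ideal_eq_center_of_compact_lie_algebra_general
    (L : Type*) [LieRing L] [LieAlgebra ℝ L] [FiniteDimensional ℝ L]
    (b : L →ₗ[ℝ] L →ₗ[ℝ] ℝ)
    (hposdef : ∀ v : L, v ≠ 0 → 0 < b v v)
    (hskew : ∀ X v w : L, b ⁅X, v⁆ w = - b v ⁅X, w⁆)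
    (𝔰 : LieSubalgebra ℝ L) (hss : LieAlgebra.HasTrivialRadical ℝ 𝔰)
    (𝔧 : LieIdeal ℝ L) (hsolv : LieAlgebra.IsSolvable 𝔧)
    (hsum : 𝔰.toSubmodule ⊔ 𝔧.toSubmodule = ⊤) :
    𝔧 = LieAlgebra.center ℝ L ∧
      (⁅(⊤ : LieIdeal ℝ L), (⊤ : LieIdeal ℝ L)⁆ : LieIdeal ℝ L).toSubmodule = 𝔰.toSubmodule := by
  have hanis (v : L) (hv : b v v = 0) : v = 0 := by
    by_contra hv0
    exact (hposdef v hv0).ne' hv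
  have hle : 𝔧.toSubmodule ≤ (center ℝ L).toSubmodule := le_center_of_isSolvable hanis hskew 𝔧
  have hdisj := disjoint_center_of_hasTrivialRadical 𝔰
  have hcenter : 𝔧 = center ℝ L := by
    rw [← LieSubmodule.toSubmodule_inj]
    calc 𝔧.toSubmodule = 𝔧.toSubmodule ⊔ 𝔰.toSubmodule ⊓ (center ℝ L).toSubmodule := by
          rw [hdisj.eq_bot, sup_bot_eq]
      _ = (center ℝ L).toSubmodule := by
          rw [← sup_inf_assoc_of_le _ hle, sup_comm, hsum, top_inf_eq]
  rw [hcenter] at hsum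
  refine ⟨hcenter, Submodule.eq_of_le_of_finrank_le (lie_top_top_le_of_sup_center_eq_top 𝔰 hsum) ?_⟩
  have hdim := finrank_le_finrank_center_add_finrank_lie_top_top hanis hskew
  have hcompl := Submodule.finrank_add_eq_of_isCompl ⟨hdisj, codisjoint_iff.2 hsum⟩
  omega

/-- Let 𝔩 be a finite-dimensional real Lie algebra admitting an inner
product (a symmetric positive-definite bilinear form `b`) with respect to which `ad X` is
skew-adjoint for every `X ∈ 𝔩` (i.e. 𝔩 is a compact Lie algebra).  Suppose `𝔩 = 𝔰 + 𝔧`,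
where `𝔰` is a semisimple Lie subalgebra (no nonzero solvable ideals, i.e. trivial radical)
and `𝔧` is a solvable ideal of 𝔩.  Then `𝔧` equals the center of 𝔩, and `⁅𝔩,𝔩⁆ = 𝔰`. -/
theorem solvable_ideal_eq_center_of_compact_lie_algebra
    (L : Type*) [LieRing L] [LieAlgebra ℝ L] [FiniteDimensional ℝ L]
    (b : L →ₗ[ℝ] L →ₗ[ℝ] ℝ)
    (hsymm : ∀ v w : L, b v w = b w v)
    (hposdef : ∀ v : L, v ≠ 0 → 0 < b v v)
    (hskew : ∀ X v w : L, b ⁅X, v⁆ w = - b v ⁅X, w⁆)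
    (𝔰 : LieSubalgebra ℝ L) (hss : LieAlgebra.HasTrivialRadical ℝ 𝔰)
    (𝔧 : LieIdeal ℝ L) (hsolv : LieAlgebra.IsSolvable 𝔧)
    (hsum : 𝔰.toSubmodule ⊔ 𝔧.toSubmodule = ⊤) :
    𝔧 = LieAlgebra.center ℝ L ∧
      (⁅(⊤ : LieIdeal ℝ L), (⊤ : LieIdeal ℝ L)⁆ : LieIdeal ℝ L).toSubmodule = 𝔰.toSubmodule :=
  solvable_ideal_eq_center_of_compact_lie_algebra_general L b hposdef hskew 𝔰 hss 𝔧 hsolv hsum
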